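/- arXiv:1310.8186 — 2 statements merged into one kernel-verified Lean document; each statement's English description precedes it below -/
import Mathlib

section
/- Let (G1,G2) be a separation of a graph G such that G1 ∩ G2 induces a complete graph. Then G is t-perfect if and only if both G1 and G2 are t-perfect. -/
/-!
Restriction: a point of `TSTAB (G[S])`, extended by zero, lies in `TSTAB G`, because an odd cycle
leaving `S` passes through a vertex of weight zero and then the edge inequalities along the
remaining even path already give the odd-cycle inequality. So it lies in the stable set polytope
of `G`, and restricting a convex combination of stable sets of `G` to `S` gives one of `G[S]`.

Gluing: write the restrictions of `x ∈ TSTAB G` to `V₁` and `V₂` as convex combinations of stable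
sets. A stable set meets the clique `V₁ ∩ V₂` in at most one vertex, so on both sides the total
weight of the sets with a given trace on `V₁ ∩ V₂` is determined by `x`: it is `x v` for the trace
`{v}` and `1 - ∑ v ∈ V₁ ∩ V₂, x v` for the empty trace. Coupling the two combinations along their
traces, each union `A ∪ B` of two sets with the same trace is stable in `G`, and the coupled
combination of these unions is `x`.
-/

open SimpleGraph

attribute [local instance] Classical.propDecidable

universe u

variable {V : Type u}

/-- A graph is subcubic if every vertex has degree (number of neighbours) at most 3. -/
def Subcubic (G : SimpleGraph V) : Prop := ∀ v : V, (G.neighborSet v).ncard ≤ 3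

/-- Two walks are edge-disjoint if they share no edge. -/
def WalkEdgeDisjoint {G : SimpleGraph V} {a b c d : V}
    (p : G.Walk a b) (q : G.Walk c d) : Prop :=
  ∀ e, e ∈ p.edges → e ∉ q.edges

/-- A skewed theta: two branch vertices joined by three pairwise edge-disjoint paths,
two of odd length and one of even length. -/
def HasSkewedTheta (G : SimpleGraph V) : Prop :=
  ∃ (a b : V) (p₁ p₂ p₃ : G.Walk a b),
    p₁.IsPath ∧ p₂.IsPath ∧ p₃.IsPath ∧
    WalkEdgeDisjoint p₁ p₂ ∧ WalkEdgeDisjoint p₁ p₃ ∧ WalkEdgeDisjoint p₂ p₃ ∧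
    Odd p₁.length ∧ Odd p₂.length ∧ Even p₃.length

/-- A graph is 2-connected: at least 3 vertices and deleting any vertex leaves it connected. -/
def TwoConnected (G : SimpleGraph V) : Prop :=
  3 ≤ Nat.card V ∧ ∀ v : V, ((⊤ : G.Subgraph).deleteVerts {v}).coe.Connected

/-- Given a bipartition with first class `A`, an edge is `P`-odd if both of its
endvertices lie in the same class. -/
def POdd (A : Set V) (e : Sym2 V) : Prop :=
  (∀ x ∈ e, x ∈ A) ∨ (∀ x ∈ e, x ∉ A)

/-- A stable (independent) set of vertices. -/
def StableSet (G : SimpleGraph V) (s : Set V) : Prop :=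
  s.Pairwise fun a b => ¬ G.Adj a b

/-- `u` is the centre of an induced claw. -/
def HasInducedClawAt (G : SimpleGraph V) (u : V) : Prop :=
  ∃ a b c : V, G.Adj u a ∧ G.Adj u b ∧ G.Adj u c ∧
    a ≠ b ∧ a ≠ c ∧ b ≠ c ∧ ¬ G.Adj a b ∧ ¬ G.Adj a c ∧ ¬ G.Adj b c

/-- A graph is claw-free if it has no induced claw. -/
def ClawFree (G : SimpleGraph V) : Prop := ∀ u : V, ¬ HasInducedClawAt G u

/-- The t-contraction of `G` at a vertex `v`: the neighbours of `v` are removed,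
and `v` becomes adjacent to all former second neighbours. -/
def tContract (G : SimpleGraph V) (v : V) :
    SimpleGraph {w : V // w ∉ G.neighborSet v} :=
  SimpleGraph.fromRel (fun a b =>
    G.Adj a b ∨ ((a : V) = v ∧ ∃ n : V, G.Adj v n ∧ G.Adj n (b : V)))

/-- One step in the formation of a t-minor: delete a vertex, or perform a
t-contraction at a vertex whose neighbourhood is stable. -/
def TStep {W W' : Type u} (G : SimpleGraph W) (H : SimpleGraph W') : Prop :=
  (∃ v : W, Nonempty (H ≃g (G.induce {w : W | w ≠ v}))) ∨
  (∃ v : W, StableSet G (G.neighborSet v) ∧ Nonempty (H ≃g tContract G v))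

/-- `H` is a t-minor of `G` if it is obtained by a series of vertex deletions
and t-contractions. -/
def IsTMinor {W W' : Type u} (G : SimpleGraph W) (H : SimpleGraph W') : Prop :=
  Relation.ReflTransGen (fun a b : (Σ U : Type u, SimpleGraph U) => TStep a.2 b.2)
    ⟨W, G⟩ ⟨W', H⟩

/-- The stable set polytope of `G`: the convex hull of characteristic vectors of stable sets. -/
noncomputable def stableSetPolytope (G : SimpleGraph V) : Set (V → ℝ) :=
  convexHull ℝ {x : V → ℝ | ∃ s : Set V, StableSet G s ∧ x = s.indicator 1}

/-- The polytope given by non-negativity, edge and odd-cycle inequalities. -/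
def TSTAB (G : SimpleGraph V) [Fintype V] : Set (V → ℝ) :=
  {x : V → ℝ |
    (∀ v : V, 0 ≤ x v ∧ x v ≤ 1) ∧
    (∀ u v : V, G.Adj u v → x u + x v ≤ 1) ∧
    (∀ (v : V) (c : G.Walk v v), c.IsCycle → Odd c.length →
      ∑ u ∈ c.support.toFinset, x u ≤ ((c.length / 2 : ℕ) : ℝ))}

/-- A graph is t-perfect if its stable set polytope coincides with `TSTAB`. -/
def TPerfect (G : SimpleGraph V) [Fintype V] : Prop :=
  stableSetPolytope G = TSTAB G

/-- The complete graph on four vertices. -/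
def K4 : SimpleGraph (Fin 4) := ⊤

/-- The 5-wheel: a 5-cycle (on `0,…,4`) plus a hub (`5`) adjacent to all cycle vertices. -/
def W5 : SimpleGraph (Fin 6) :=
  SimpleGraph.fromRel (fun i j =>
    (j : ℕ) = 5 ∨ ((i : ℕ) < 5 ∧ (j : ℕ) < 5 ∧ (j : ℕ) = ((i : ℕ) + 1) % 5))

/-- The 5-cycle. -/
def C5 : SimpleGraph (Fin 5) :=
  SimpleGraph.fromRel (fun i j => (j : ℕ) = ((i : ℕ) + 1) % 5)

/-- An induced path of `G` all of whose vertices lie in `S`. -/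
def IsInducedPathIn (G : SimpleGraph V) (S : Set V) {a b : V} (p : G.Walk a b) : Prop :=
  p.IsPath ∧ (∀ x ∈ p.support, x ∈ S) ∧
    ∀ x y : V, x ∈ p.support → y ∈ p.support → G.Adj x y → s(x, y) ∈ p.edges

/-- The data of a skewed prism: two triangles `x₁x₂x₃`, `y₁y₂y₃` joined by three
vertex-disjoint induced paths `P₁,P₂,P₃`, where `P₁,P₂` are even and `P₃` is odd, and
the triangle edges are the only edges between the paths. -/
def IsSkewedPrism (G : SimpleGraph V) (x₁ x₂ x₃ y₁ y₂ y₃ : V)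
    (P₁ : G.Walk x₁ y₁) (P₂ : G.Walk x₂ y₂) (P₃ : G.Walk x₃ y₃) : Prop :=
  P₁.IsPath ∧ P₂.IsPath ∧ P₃.IsPath ∧
  Even P₁.length ∧ Even P₂.length ∧ Odd P₃.length ∧
  P₁.support.Disjoint P₂.support ∧ P₁.support.Disjoint P₃.support ∧
  P₂.support.Disjoint P₃.support ∧
  G.Adj x₁ x₂ ∧ G.Adj x₁ x₃ ∧ G.Adj x₂ x₃ ∧
  G.Adj y₁ y₂ ∧ G.Adj y₁ y₃ ∧ G.Adj y₂ y₃ ∧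
  (∀ u w : V, u ∈ P₁.support ++ P₂.support ++ P₃.support →
    w ∈ P₁.support ++ P₂.support ++ P₃.support →
    (G.Adj u w ↔ (s(u, w) ∈ P₁.edges ∨ s(u, w) ∈ P₂.edges ∨ s(u, w) ∈ P₃.edges ∨
      s(u, w) ∈ [s(x₁, x₂), s(x₁, x₃), s(x₂, x₃), s(y₁, y₂), s(y₁, y₃), s(y₂, y₃)])))

/-- `G` contains a skewed prism as an induced subgraph. -/
def HasSkewedPrism (G : SimpleGraph V) : Prop :=
  ∃ (x₁ x₂ x₃ y₁ y₂ y₃ : V) (P₁ : G.Walk x₁ y₁) (P₂ : G.Walk x₂ y₂) (P₃ : G.Walk x₃ y₃),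
    IsSkewedPrism G x₁ x₂ x₃ y₁ y₂ y₃ P₁ P₂ P₃

/-- A `u`–`v`-linked obstruction with all vertices inside `S`: four vertex-disjoint
induced paths `R = u…r`, `S' = v…s`, `X = x₁…x₂`, `Y = y₁…y₂` with triangles
`r,x₁,y₁` and `s,x₂,y₂`, the triangle edges being the only edges between the paths,
and `X` of even length. -/
def IsLinkedObstructionIn (G : SimpleGraph V) (S : Set V) (u v : V) : Prop :=
  ∃ (r s x₁ x₂ y₁ y₂ : V) (R : G.Walk u r) (S' : G.Walk v s)
    (X : G.Walk x₁ x₂) (Y : G.Walk y₁ y₂),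
    R.IsPath ∧ S'.IsPath ∧ X.IsPath ∧ Y.IsPath ∧ Even X.length ∧
    (∀ w ∈ R.support, w ∈ S) ∧ (∀ w ∈ S'.support, w ∈ S) ∧
    (∀ w ∈ X.support, w ∈ S) ∧ (∀ w ∈ Y.support, w ∈ S) ∧
    R.support.Disjoint S'.support ∧ R.support.Disjoint X.support ∧
    R.support.Disjoint Y.support ∧ S'.support.Disjoint X.support ∧
    S'.support.Disjoint Y.support ∧ X.support.Disjoint Y.support ∧
    G.Adj r x₁ ∧ G.Adj r y₁ ∧ G.Adj x₁ y₁ ∧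
    G.Adj s x₂ ∧ G.Adj s y₂ ∧ G.Adj x₂ y₂ ∧
    (∀ a b : V, a ∈ R.support ++ S'.support ++ X.support ++ Y.support →
      b ∈ R.support ++ S'.support ++ X.support ++ Y.support →
      (G.Adj a b ↔ (s(a, b) ∈ R.edges ∨ s(a, b) ∈ S'.edges ∨ s(a, b) ∈ X.edges ∨
        s(a, b) ∈ Y.edges ∨
        s(a, b) ∈ [s(r, x₁), s(r, y₁), s(x₁, y₁), s(s, x₂), s(s, y₂), s(x₂, y₂)])))

namespace SimpleGraph.Walk

variable {G : SimpleGraph V} {y : V → ℝ}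

theorem sum_support_le (hy : ∀ v, y v ≤ 1) (hyE : ∀ u v, G.Adj u v → y u + y v ≤ 1) :
    ∀ {a b : V} (p : G.Walk a b), (p.support.map y).sum ≤ ((p.length + 1) / 2 : ℕ) + y b
  | _, _, .nil => by simp
  | _, _, .cons _ .nil => by simpa using hy _
  | _, _, .cons h (.cons h' q) => by
      have ih := sum_support_le hy hyE q
      have hlen : (q.length + 1 + 1 + 1) / 2 = (q.length + 1) / 2 + 1 := by omega
      simp only [support_cons, List.map_cons, List.sum_cons, length_cons, hlen]
      push_cast
      linarith [hyE _ _ h]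

theorem IsCycle.sum_support_le_of_start_eq_zero (hy : ∀ v, y v ≤ 1)
    (hyE : ∀ u v, G.Adj u v → y u + y v ≤ 1) {v : V} {c : G.Walk v v} (hc : c.IsCycle)
    (hyv : y v = 0) : ∑ w ∈ c.support.toFinset, y w ≤ (c.length / 2 : ℕ) := by
  cases c with
  | nil => exact absurd hc not_isCycle_nil
  | cons h q =>
    have hnodup : q.support.Nodup := by simpa using hc.support_nodup
    have hfin : (cons h q).support.toFinset = q.support.toFinset := by
      simp [Finset.insert_eq_of_mem (List.mem_toFinset.2 q.end_mem_support)]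
    rw [hfin, List.sum_toFinset _ hnodup, length_cons]
    simpa [hyv] using q.sum_support_le hy hyE

theorem IsCycle.sum_support_le_of_eq_zero (hy : ∀ v, y v ≤ 1)
    (hyE : ∀ u v, G.Adj u v → y u + y v ≤ 1) {v u : V} {c : G.Walk v v} (hc : c.IsCycle)
    (hu : u ∈ c.support) (hyu : y u = 0) :
    ∑ w ∈ c.support.toFinset, y w ≤ (c.length / 2 : ℕ) := by
  have hsupp : (c.rotate u hu).support.toFinset = c.support.toFinset := by
    ext; simp [mem_support_rotate_iff]
  rw [← hsupp, ← length_rotate c u hu]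
  exact (hc.rotate hu).sum_support_le_of_start_eq_zero hy hyE hyu

theorem sum_toFinset_support_map {W : Type*} {H : SimpleGraph W} (f : H →g G)
    (hf : Function.Injective f) {a b : W} (p : H.Walk a b) (x : V → ℝ) :
    ∑ v ∈ (p.map f).support.toFinset, x v = ∑ w ∈ p.support.toFinset, x (f w) := by
  have himage : (p.map f).support.toFinset = p.support.toFinset.image f := by
    ext; simp [support_map]
  rw [himage, Finset.sum_image fun _ _ _ _ h => hf h]

theorem IsCycle.induce {S : Set V} {v : V} {c : G.Walk v v} (hc : c.IsCycle)
    (hcS : ∀ u ∈ c.support, u ∈ S) : (c.induce S hcS).IsCycle := by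
  have hinj : Function.Injective (Embedding.induce (G := G) S).toHom :=
    (Embedding.induce (G := G) S).injective
  rw [← isCycle_map_iff_of_injective hinj, map_induce]
  exact hc

theorem length_induce {S : Set V} {a b : V} (p : G.Walk a b) (hp : ∀ v ∈ p.support, v ∈ S) :
    (p.induce S hp).length = p.length := by
  rw [← length_map (Embedding.induce S).toHom, map_induce]; rfl

theorem sum_toFinset_support_induce {S : Set V} {a b : V} (p : G.Walk a b)
    (hp : ∀ v ∈ p.support, v ∈ S) (x : V → ℝ) :
    ∑ w ∈ (p.induce S hp).support.toFinset, x w = ∑ v ∈ p.support.toFinset, x v := by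
  rw [← Finset.sum_image (f := x) fun _ _ _ _ h => Subtype.val_injective h]
  congr 1
  ext; simpa [support_induce] using hp _

end SimpleGraph.Walk

section

variable {G : SimpleGraph V}

theorem convex_TSTAB [Fintype V] (G : SimpleGraph V) : Convex ℝ (TSTAB G) := by
  rintro x ⟨hx0, hxE, hxC⟩ y ⟨hy0, hyE, hyC⟩ a b ha hb hab
  refine ⟨fun v => ⟨?_, ?_⟩, fun u v huv => ?_, fun v c hc hodd => ?_⟩ <;>
    simp only [Pi.add_apply, Pi.smul_apply, smul_eq_mul, Finset.sum_add_distrib, ← Finset.mul_sum]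
  · nlinarith [(hx0 v).1, (hy0 v).1]
  · nlinarith [(hx0 v).2, (hy0 v).2]
  · nlinarith [hxE u v huv, hyE u v huv]
  · nlinarith [hxC v c hc hodd, hyC v c hc hodd]

theorem indicator_mem_TSTAB [Fintype V] {s : Set V} (hs : StableSet G s) :
    s.indicator 1 ∈ TSTAB G := by
  have hbound : ∀ v, 0 ≤ s.indicator (1 : V → ℝ) v ∧ s.indicator (1 : V → ℝ) v ≤ 1 := fun v => by
    by_cases hv : v ∈ s <;> simp [hv]
  have hedge : ∀ u v, G.Adj u v → s.indicator (1 : V → ℝ) u + s.indicator 1 v ≤ 1 := by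
    intro u v huv
    by_cases hu : u ∈ s <;> by_cases hv : v ∈ s <;> simp [hu, hv]
    exact (hs hu hv huv.ne huv).elim
  refine ⟨hbound, hedge, fun v c hc _ => ?_⟩
  -- A cycle has an edge, so it cannot lie inside `s`: it passes through a vertex of weight zero.
  obtain ⟨u, hu, hus⟩ : ∃ u ∈ c.support, u ∉ s := by
    by_contra! hall
    cases c with
    | nil => exact Walk.not_isCycle_nil hc
    | cons h q => exact hs (hall _ (by simp)) (hall _ (by simp)) h.ne h
  exact hc.sum_support_le_of_eq_zero (fun v => (hbound v).2) hedge hu (by simp [hus])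

theorem stableSetPolytope_subset_TSTAB [Fintype V] (G : SimpleGraph V) :
    stableSetPolytope G ⊆ TSTAB G :=
  convexHull_min (by rintro _ ⟨s, hs, rfl⟩; exact indicator_mem_TSTAB hs) (convex_TSTAB G)

theorem comp_mem_TSTAB [Fintype V] {W : Type*} [Fintype W] {H : SimpleGraph W} (f : H →g G)
    (hf : Function.Injective f) {x : V → ℝ} (hx : x ∈ TSTAB G) : x ∘ f ∈ TSTAB H := by
  obtain ⟨hx0, hxE, hxC⟩ := hx
  refine ⟨fun v => hx0 (f v), fun u v huv => hxE _ _ (f.map_adj huv), fun v c hc hodd => ?_⟩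
  have := hxC _ (c.map f) (hc.map hf) (by rwa [Walk.length_map])
  rwa [Walk.sum_toFinset_support_map f hf, Walk.length_map] at this

theorem restrict_mem_TSTAB [Fintype V] (S : Set V) [Fintype S] {x : V → ℝ} (hx : x ∈ TSTAB G) :
    (fun v : S => x v) ∈ TSTAB (G.induce S) :=
  comp_mem_TSTAB (Embedding.induce S).toHom (Embedding.induce (G := G) S).injective hx

theorem mem_TSTAB_of_restrict [Fintype V] {S : Set V} [Fintype S] {x : V → ℝ}
    (hx : (fun v : S => x v) ∈ TSTAB (G.induce S)) (hx0 : ∀ v ∉ S, x v = 0) : x ∈ TSTAB G := by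
  obtain ⟨hxS, hxE, hxC⟩ := hx
  have hbound : ∀ v, 0 ≤ x v ∧ x v ≤ 1 := fun v => by
    by_cases hv : v ∈ S
    · exact hxS ⟨v, hv⟩
    · simp [hx0 v hv]
  have hedge : ∀ u v, G.Adj u v → x u + x v ≤ 1 := by
    intro u v huv
    by_cases hu : u ∈ S
    · by_cases hv : v ∈ S
      · exact hxE ⟨u, hu⟩ ⟨v, hv⟩ huv
      · rw [hx0 v hv, add_zero]; exact (hbound u).2
    · rw [hx0 u hu, zero_add]; exact (hbound v).2
  refine ⟨hbound, hedge, fun v c hc hodd => ?_⟩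
  by_cases hcS : ∀ u ∈ c.support, u ∈ S
  · have := hxC _ _ (hc.induce hcS) ((c.length_induce hcS).symm ▸ hodd)
    rw [← Walk.sum_toFinset_support_induce c hcS, ← c.length_induce hcS]
    -- the two sides differ only in the `DecidableEq` instance used by `toFinset`
    convert this
  · push Not at hcS
    obtain ⟨u, hu, huS⟩ := hcS
    exact hc.sum_support_le_of_eq_zero (fun v => (hbound v).2) hedge hu (hx0 u huS)

theorem comp_mem_stableSetPolytope {W : Type*} {H : SimpleGraph W} (f : H →g G) {x : V → ℝ}
    (hx : x ∈ stableSetPolytope G) : x ∘ f ∈ stableSetPolytope H := by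
  have himage : LinearMap.funLeft ℝ ℝ f '' stableSetPolytope G ⊆ stableSetPolytope H := by
    rw [stableSetPolytope, LinearMap.image_convexHull]
    refine convexHull_mono ?_
    rintro _ ⟨_, ⟨s, hs, rfl⟩, rfl⟩
    refine ⟨f ⁻¹' s, fun a ha b hb _ hab => hs ha hb (f.map_adj hab).ne (f.map_adj hab), ?_⟩
    ext w
    simp [LinearMap.funLeft, Set.indicator_apply]
  exact himage ⟨x, hx, rfl⟩

theorem TPerfect.induce [Fintype V] (hG : TPerfect G) (S : Set V) [Fintype S] :
    TPerfect (G.induce S) := by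
  refine (stableSetPolytope_subset_TSTAB _).antisymm fun y hy => ?_
  have hrestrict : (fun v : S => Function.extend Subtype.val y 0 v) = y :=
    Function.extend_comp Subtype.val_injective y 0
  have hx : Function.extend Subtype.val y 0 ∈ stableSetPolytope G := by
    refine hG ▸ mem_TSTAB_of_restrict (hrestrict ▸ hy) fun v hv => ?_
    exact Function.extend_apply' _ _ _ fun ⟨w, hw⟩ => hv (hw ▸ w.2)
  rw [← hrestrict]
  exact comp_mem_stableSetPolytope (Embedding.induce S).toHom hx

theorem sum_smul_indicator_apply {ι : Type*} [Fintype ι] (w : ι → ℝ) (A : ι → Set V) (v : V) :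
    (∑ i, w i • (A i).indicator (1 : V → ℝ)) v = ∑ i with v ∈ A i, w i := by
  simp [Finset.sum_apply, Set.indicator_apply, Finset.sum_filter]

theorem exists_stableSet_decomposition {x : V → ℝ} (hx : x ∈ stableSetPolytope G) :
    ∃ (ι : Type) (_ : Fintype ι) (w : ι → ℝ) (A : ι → Set V), (∀ i, 0 ≤ w i) ∧
      ∑ i, w i = 1 ∧ (∀ i, StableSet G (A i)) ∧ ∀ v, ∑ i with v ∈ A i, w i = x v := by
  obtain ⟨ι, _, w, z, hw0, hw1, hz, rfl⟩ := mem_convexHull_iff_exists_fintype.1 hx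
  choose A hA hzA using hz
  refine ⟨ι, ‹_›, w, A, hw0, hw1, hA, fun v => ?_⟩
  rw [show z = fun i => (A i).indicator 1 from funext hzA, sum_smul_indicator_apply]

theorem exists_stableSet_decomposition_of_induce {S : Set V} {x : V → ℝ}
    (hx : (fun v : S => x v) ∈ stableSetPolytope (G.induce S)) :
    ∃ (ι : Type) (_ : Fintype ι) (w : ι → ℝ) (A : ι → Set V), (∀ i, 0 ≤ w i) ∧
      ∑ i, w i = 1 ∧ (∀ i, StableSet G (A i) ∧ A i ⊆ S) ∧
      ∀ v ∈ S, ∑ i with v ∈ A i, w i = x v := by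
  obtain ⟨ι, _, w, A, hw0, hw1, hA, hxA⟩ := exists_stableSet_decomposition hx
  refine ⟨ι, ‹_›, w, fun i => Subtype.val '' A i, hw0, hw1, fun i => ⟨?_, by simp⟩,
    fun v hv => ?_⟩
  · rintro _ ⟨a, ha, rfl⟩ _ ⟨b, hb, rfl⟩ hab
    exact hA i ha hb (ne_of_apply_ne _ hab)
  · rw [← hxA ⟨v, hv⟩]
    simp [hv]

theorem mem_stableSetPolytope_of_sum {ι : Type*} [Fintype ι] {w : ι → ℝ} {A : ι → Set V}
    (hw0 : ∀ i, 0 ≤ w i) (hw1 : ∑ i, w i = 1) (hA : ∀ i, w i ≠ 0 → StableSet G (A i))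
    {x : V → ℝ} (hx : ∀ v, ∑ i with v ∈ A i, w i = x v) : x ∈ stableSetPolytope G := by
  obtain rfl : x = ∑ i, w i • (A i).indicator 1 :=
    funext fun v => by rw [sum_smul_indicator_apply, hx]
  rw [← Finset.centerMass_eq_of_sum_1 _ _ hw1, ← Finset.centerMass_filter_ne_zero]
  refine Finset.centerMass_mem_convexHull _ (fun i _ => hw0 i) ?_ fun i hi => ?_
  · rw [Finset.sum_filter_ne_zero, hw1]; exact one_pos
  · exact ⟨A i, hA i (Finset.mem_filter.1 hi).2, rfl⟩

end

theorem sum_filter_congr_of_ne_zero {α : Type*} [Fintype α] {W : α → ℝ} {P Q : α → Prop}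
    (h : ∀ a, W a ≠ 0 → (P a ↔ Q a)) : ∑ a with P a, W a = ∑ a with Q a, W a := by
  simp_rw [Finset.sum_filter]
  refine Finset.sum_congr rfl fun a _ => ?_
  by_cases ha : W a = 0
  · simp [ha]
  · simp only [h a ha]

theorem sum_filter_fst_eq {ι κ : Type*} [Fintype ι] [Fintype κ] {W : ι × κ → ℝ} {w : ι → ℝ}
    (hW : ∀ i, ∑ j, W (i, j) = w i) (P : ι → Prop) :
    ∑ p with P p.1, W p = ∑ i with P i, w i := by
  rw [Finset.sum_filter, Fintype.sum_prod_type, Finset.sum_filter]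
  exact Finset.sum_congr rfl fun i _ => by split_ifs <;> simp [hW]

theorem sum_filter_snd_eq {ι κ : Type*} [Fintype ι] [Fintype κ] {W : ι × κ → ℝ} {u : κ → ℝ}
    (hW : ∀ j, ∑ i, W (i, j) = u j) (P : κ → Prop) :
    ∑ p with P p.2, W p = ∑ j with P j, u j := by
  rw [Finset.sum_filter, Fintype.sum_prod_type_right, Finset.sum_filter]
  exact Finset.sum_congr rfl fun j _ => by split_ifs <;> simp [hW]

theorem sum_ite_mul_div_fiber {κ β : Type*} [Fintype κ] (u : κ → ℝ) (g : κ → β) (b : β)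
    {c : ℝ} (hc : 0 ≤ c) (hcM : c ≤ ∑ j with g j = b, u j) :
    ∑ j, (if g j = b then c * u j / ∑ j' with g j' = b, u j' else 0) = c := by
  rw [← Finset.sum_filter, ← Finset.sum_div, ← Finset.mul_sum]
  rcases eq_or_ne (∑ j with g j = b, u j) 0 with hM | hM
  · rw [hM, div_zero]; linarith
  · field_simp

theorem exists_coupling {ι κ β : Type*} [Fintype ι] [Fintype κ] {w : ι → ℝ} {u : κ → ℝ}
    (hw : ∀ i, 0 ≤ w i) (hu : ∀ j, 0 ≤ u j) (f : ι → β) (g : κ → β)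
    (hfg : ∀ b, ∑ i with f i = b, w i = ∑ j with g j = b, u j) :
    ∃ W : ι × κ → ℝ, (∀ p, 0 ≤ W p) ∧ (∀ p, W p ≠ 0 → f p.1 = g p.2) ∧
      (∀ i, ∑ j, W (i, j) = w i) ∧ ∀ j, ∑ i, W (i, j) = u j := by
  set m : β → ℝ := fun b => ∑ i with f i = b, w i
  have hle_w : ∀ i, w i ≤ m (f i) := fun i =>
    Finset.single_le_sum (fun i _ => hw i) (Finset.mem_filter.2 ⟨Finset.mem_univ i, rfl⟩)
  have hle_u : ∀ j, u j ≤ m (g j) := fun j => by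
    simp only [m, hfg]
    exact Finset.single_le_sum (fun j _ => hu j) (Finset.mem_filter.2 ⟨Finset.mem_univ j, rfl⟩)
  refine ⟨fun p => if f p.1 = g p.2 then w p.1 * u p.2 / m (f p.1) else 0, fun p => ?_,
    fun p hp => by_contra fun h => hp (if_neg h), fun i => ?_, fun j => ?_⟩
  · dsimp only
    split_ifs
    · exact div_nonneg (mul_nonneg (hw _) (hu _)) (Finset.sum_nonneg fun i _ => hw i)
    · exact le_rfl
  · simp_rw [eq_comm (a := f i), m, hfg (f i)]
    exact sum_ite_mul_div_fiber u g (f i) (hw i) (hfg (f i) ▸ hle_w i)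
  · have hterm : ∀ i, (if f i = g j then w i * u j / m (f i) else 0)
        = if f i = g j then u j * w i / m (g j) else 0 := fun i => by
      split_ifs with h
      · rw [h, mul_comm]
      · rfl
    simp_rw [hterm]
    exact sum_ite_mul_div_fiber w f (g j) (hu j) (hle_u j)

section

variable {G : SimpleGraph V}

theorem sum_filter_eq_singleton_of_subsingleton {ι : Type*} [Fintype ι] {w : ι → ℝ}
    {F : ι → Set V} (hF : ∀ i, (F i).Subsingleton) (v : V) :
    ∑ i with F i = {v}, w i = ∑ i with v ∈ F i, w i :=
  Finset.sum_congr (Finset.filter_congr fun i _ =>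
    ⟨fun h => h ▸ rfl, (hF i).eq_singleton_of_mem⟩) fun _ _ => rfl

theorem sum_filter_eq_empty_of_subsingleton [Fintype V] {ι : Type*} [Fintype ι] {w : ι → ℝ}
    {F : ι → Set V} (hF : ∀ i, (F i).Subsingleton) :
    ∑ i with F i = ∅, w i = ∑ i, w i - ∑ v, ∑ i with v ∈ F i, w i := by
  have hcount : ∀ i, ∑ v, (if v ∈ F i then w i else 0) = if F i = ∅ then 0 else w i := by
    intro i
    rcases (hF i).eq_empty_or_singleton with h | ⟨a, h⟩ <;> simp [h]
  simp_rw [Finset.sum_filter]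
  rw [Finset.sum_comm, Finset.sum_congr rfl fun i _ => hcount i, ← Finset.sum_sub_distrib]
  exact Finset.sum_congr rfl fun i _ => by split_ifs <;> ring

theorem sum_filter_eq_of_subsingleton [Fintype V] {ι κ : Type*} [Fintype ι] [Fintype κ]
    {w : ι → ℝ} {u : κ → ℝ} {F : ι → Set V} {H : κ → Set V} (hF : ∀ i, (F i).Subsingleton)
    (hH : ∀ j, (H j).Subsingleton) (htotal : ∑ i, w i = ∑ j, u j)
    (hcoord : ∀ v, ∑ i with v ∈ F i, w i = ∑ j with v ∈ H j, u j) (c : Set V) :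
    ∑ i with F i = c, w i = ∑ j with H j = c, u j := by
  rcases c.eq_empty_or_nonempty with rfl | ⟨v, hv⟩
  · simp_rw [sum_filter_eq_empty_of_subsingleton hF, sum_filter_eq_empty_of_subsingleton hH,
      htotal, hcoord]
  by_cases hc : c = {v}
  · subst hc
    rw [sum_filter_eq_singleton_of_subsingleton hF, sum_filter_eq_singleton_of_subsingleton hH,
      hcoord]
  · have hFc : ∀ i, F i ≠ c := fun i h => hc ((h ▸ hF i).eq_singleton_of_mem hv)
    have hHc : ∀ j, H j ≠ c := fun j h => hc ((h ▸ hH j).eq_singleton_of_mem hv)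
    simp [hFc, hHc]

theorem sum_filter_mem_inter {ι : Type*} [Fintype ι] {w : ι → ℝ} {A : ι → Set V} {S T : Set V}
    (hAS : ∀ i, A i ⊆ S) {x : V → ℝ} (hx : ∀ v ∈ S, ∑ i with v ∈ A i, w i = x v) (v : V) :
    ∑ i with v ∈ A i ∩ T, w i = if v ∈ S ∩ T then x v else 0 := by
  split_ifs with hv
  · rw [← hx v hv.1]
    exact Finset.sum_congr (Finset.filter_congr fun i _ => by simp [hv.2]) fun _ _ => rfl
  · refine Finset.sum_eq_zero fun i hi => absurd ?_ hv
    obtain ⟨hvA, hvT⟩ := (Finset.mem_filter.1 hi).2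
    exact ⟨hAS i hvA, hvT⟩

theorem StableSet.subsingleton_inter {A K : Set V} (hA : StableSet G A) (hK : G.IsClique K) :
    (A ∩ K).Subsingleton :=
  fun _ ha _ hb => by_contra fun hab => hA ha.1 hb.1 hab (hK ha.2 hb.2 hab)

theorem mem_union_iff_of_inter_eq {A B V₁ V₂ : Set V} (h : A ∩ V₂ = B ∩ V₁) {v : V}
    (hv : v ∈ V₁) : v ∈ A ∪ B ↔ v ∈ A :=
  ⟨fun hAB => hAB.elim id fun hB => (h ▸ ⟨hB, hv⟩ : v ∈ A ∩ V₂).1, Or.inl⟩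

theorem StableSet.union_of_separation {V₁ V₂ : Set V}
    (hedges : ∀ e ∈ G.edgeSet, (∀ x ∈ e, x ∈ V₁) ∨ (∀ x ∈ e, x ∈ V₂)) {A B : Set V}
    (hA : StableSet G A) (hB : StableSet G B) (htrace : A ∩ V₂ = B ∩ V₁) :
    StableSet G (A ∪ B) := by
  intro a ha b hb hab hadj
  rcases hedges s(a, b) hadj with h | h
  · have hV := fun c (hc : c ∈ s(a, b)) => mem_union_iff_of_inter_eq htrace (h c hc)
    exact hA ((hV a (Sym2.mem_mk_left a b)).1 ha) ((hV b (Sym2.mem_mk_right a b)).1 hb) hab hadj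
  · have hV := fun c (hc : c ∈ s(a, b)) => mem_union_iff_of_inter_eq htrace.symm (h c hc)
    rw [Set.union_comm] at ha hb
    exact hB ((hV a (Sym2.mem_mk_left a b)).1 ha) ((hV b (Sym2.mem_mk_right a b)).1 hb) hab hadj

theorem TPerfect.of_isClique_separation [Fintype V] {V₁ V₂ : Set V} [Fintype V₁] [Fintype V₂]
    (hunion : V₁ ∪ V₂ = Set.univ)
    (hedges : ∀ e ∈ G.edgeSet, (∀ x ∈ e, x ∈ V₁) ∨ (∀ x ∈ e, x ∈ V₂))
    (hclique : G.IsClique (V₁ ∩ V₂)) (h₁ : TPerfect (G.induce V₁))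
    (h₂ : TPerfect (G.induce V₂)) : TPerfect G := by
  refine (stableSetPolytope_subset_TSTAB G).antisymm fun x hx => ?_
  obtain ⟨ι, _, w, A, hw0, hw1, hA, hxA⟩ := exists_stableSet_decomposition_of_induce
    (h₁ ▸ restrict_mem_TSTAB V₁ hx)
  obtain ⟨κ, _, u, B, hu0, hu1, hB, hxB⟩ := exists_stableSet_decomposition_of_induce
    (h₂ ▸ restrict_mem_TSTAB V₂ hx)
  have htrace : ∀ c, ∑ i with A i ∩ V₂ = c, w i = ∑ j with B j ∩ V₁ = c, u j :=
    sum_filter_eq_of_subsingleton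
      (fun i => ((hA i).1.subsingleton_inter hclique).anti fun v hv => ⟨hv.1, (hA i).2 hv.1, hv.2⟩)
      (fun j => ((hB j).1.subsingleton_inter hclique).anti fun v hv => ⟨hv.1, hv.2, (hB j).2 hv.1⟩)
      (by rw [hw1, hu1]) fun v => by
        have hA₂ := sum_filter_mem_inter (T := V₂) (fun i => (hA i).2) hxA v
        have hB₁ := sum_filter_mem_inter (T := V₁) (fun j => (hB j).2) hxB v
        simp only [Set.inter_comm V₂ V₁] at hB₁
        convert hA₂.trans hB₁.symm
  obtain ⟨W, hW0, hWtrace, hWi, hWj⟩ := exists_coupling hw0 hu0 _ _ htrace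
  refine mem_stableSetPolytope_of_sum (A := fun p => A p.1 ∪ B p.2) hW0 ?_
    (fun p hp => (hA p.1).1.union_of_separation hedges (hB p.2).1 (hWtrace p hp)) fun v => ?_
  · rw [Fintype.sum_prod_type]; simp_rw [hWi]; exact hw1
  by_cases hv : v ∈ V₁
  · rw [sum_filter_congr_of_ne_zero fun p hp => mem_union_iff_of_inter_eq (hWtrace p hp) hv,
      sum_filter_fst_eq hWi (fun i => v ∈ A i), hxA v hv]
  · have hv₂ : v ∈ V₂ := ((hunion ▸ Set.mem_univ v : v ∈ V₁ ∪ V₂)).resolve_left hv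
    have hBA : ∀ p, W p ≠ 0 → (v ∈ A p.1 ∪ B p.2 ↔ v ∈ B p.2) := fun p hp => by
      rw [Set.union_comm]; exact mem_union_iff_of_inter_eq (hWtrace p hp).symm hv₂
    rw [sum_filter_congr_of_ne_zero hBA, sum_filter_snd_eq hWj (fun j => v ∈ B j), hxB v hv₂]

end

theorem stmt_17_general {V : Type u} [Fintype V] (G : SimpleGraph V)
    (V₁ V₂ : Set V) (hunion : V₁ ∪ V₂ = Set.univ)
    (hedges : ∀ e ∈ G.edgeSet, (∀ x ∈ e, x ∈ V₁) ∨ (∀ x ∈ e, x ∈ V₂))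
    (hclique : G.IsClique (V₁ ∩ V₂)) :
    TPerfect G ↔ (TPerfect (G.induce V₁) ∧ TPerfect (G.induce V₂)) :=
  ⟨fun hG => ⟨hG.induce V₁, hG.induce V₂⟩,
    fun ⟨h₁, h₂⟩ => TPerfect.of_isClique_separation hunion hedges hclique h₁ h₂⟩

/-- if `(G₁,G₂)` is a separation of `G` whose separator `V(G₁) ∩ V(G₂)`
induces a complete graph, then `G` is t-perfect iff both `G₁` and `G₂` are t-perfect. -/
theorem stmt_17 {V : Type u} [Fintype V] (G : SimpleGraph V)
    (V₁ V₂ : Set V) (hunion : V₁ ∪ V₂ = Set.univ)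
    (hprop₁ : V₁ ≠ Set.univ) (hprop₂ : V₂ ≠ Set.univ)
    (hedges : ∀ e ∈ G.edgeSet, (∀ x ∈ e, x ∈ V₁) ∨ (∀ x ∈ e, x ∈ V₂))
    (hclique : G.IsClique (V₁ ∩ V₂)) :
    TPerfect G ↔ (TPerfect (G.induce V₁) ∧ TPerfect (G.induce V₂)) :=
  stmt_17_general G V₁ V₂ hunion hedges hclique
end

section
/- Let C be a cycle and let P and Q be two disjoint C-paths, with endvertices p1,p2 of P and q1,q2 of Q on C. If P and Q are not crossing on C, then C ∪ P ∪ Q contains two edge-disjoint cycles C1 and C2 such that C1 contains any prescribed edge e1 of C that is separated from P and Q, and similarly for C2; in particular, if C has exactly two odd-parity-carrying edges lying in distinct segments, C ∪ P ∪ Q contains two edge-disjoint odd cycles. -/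
open SimpleGraph

attribute [local instance] Classical.propDecidable

universe u

variable {V : Type u}

/-! The two cycles are `C₁ = W₁ · P⁻¹` and `C₂ = W₂ · Q⁻¹`, where `W₁` and `W₂` are the arcs of
`c` witnessing that `P` and `Q` do not cross. These arcs are vertex-disjoint because every vertex
of `c` has exactly two `c`-neighbours: an interior vertex of `W₁` already uses both of them inside
`W₁`, so a walk along `c` starting outside `W₁` can only enter `W₁` through `p₁` or `p₂`, which
`W₂` avoids. For the parity part, a closed walk crosses the bipartition `(A, Aᶜ)` an even number
of times, so a cycle whose only `P`-odd edge is `e₁` has odd length. -/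

theorem pOdd_mk_iff {A : Set V} {x y : V} : POdd A s(x, y) ↔ (x ∈ A ↔ y ∈ A) := by
  by_cases hx : x ∈ A <;> by_cases hy : y ∈ A <;> simp [POdd, hx, hy]

namespace SimpleGraph.Walk

variable {G : SimpleGraph V} {u v w x y : V}

theorem toSubgraph_le_of_edges_subset {p : G.Walk u v} {q : G.Walk w x} (hp : ¬ p.Nil)
    (h : ∀ e ∈ p.edges, e ∈ q.edges) : p.toSubgraph ≤ q.toSubgraph :=
  (toSubgraph_le_iff hp).mpr fun e he => q.mem_edges_toSubgraph.mpr (h e he)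

theorem disjoint_edges_of_disjoint_support {p : G.Walk u v} {q : G.Walk w x}
    (h : p.support.Disjoint q.support) : p.edges.Disjoint q.edges := by
  refine List.disjoint_left.mpr fun e hp hq => ?_
  induction e using Sym2.ind with
  | _ a b =>
    exact List.disjoint_left.mp h (p.fst_mem_support_of_mem_edges hp)
      (q.fst_mem_support_of_mem_edges hq)

theorem IsPath.ncard_neighborSet_toSubgraph_eq_two_of_ne {p : G.Walk u v} (hp : p.IsPath)
    (hx : x ∈ p.support) (hxu : x ≠ u) (hxv : x ≠ v) :
    (p.toSubgraph.neighborSet x).ncard = 2 := by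
  obtain ⟨i, rfl, hi⟩ := p.mem_support_iff_exists_getVert.mp hx
  refine hp.ncard_neighborSet_toSubgraph_internal_eq_two ?_ ?_
  · rintro rfl
    exact hxu p.getVert_zero
  · exact lt_of_le_of_ne hi (by rintro rfl; exact hxv p.getVert_length)

theorem IsCycle.support_disjoint_of_toSubgraph_le {c : G.Walk v v} (hc : c.IsCycle)
    {W : G.Walk u w} (hW : W.IsPath) (hWc : W.toSubgraph ≤ c.toSubgraph)
    (q : G.Walk x y) (hqc : q.toSubgraph ≤ c.toSubgraph)
    (hx : x ∉ W.support) (hu : u ∉ q.support) (hw : w ∉ q.support) :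
    W.support.Disjoint q.support := by
  induction q with
  | nil => simpa using hx
  | @cons x y z hadj q ih =>
    simp only [Walk.toSubgraph, sup_le_iff, subgraphOfAdj_le_iff] at hqc
    simp only [support_cons, List.mem_cons, not_or] at hu hw
    have hy : y ∉ W.support := by
      intro hy
      have hW2 := hW.ncard_neighborSet_toSubgraph_eq_two_of_ne hy
        (fun h => hu.2 (h ▸ q.start_mem_support)) (fun h => hw.2 (h ▸ q.start_mem_support))
      have hc2 := hc.ncard_neighborSet_toSubgraph_eq_two
        (c.mem_verts_toSubgraph.mp (c.toSubgraph.edge_vert hqc.1.symm))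
      have hnbr : W.toSubgraph.neighborSet y = c.toSubgraph.neighborSet y :=
        Set.eq_of_subset_of_ncard_le (Subgraph.neighborSet_subset_of_subgraph hWc y)
          (by omega) (Set.finite_of_ncard_pos (by omega))
      have hyx : W.toSubgraph.Adj y x := by
        rw [← Subgraph.mem_neighborSet, hnbr]
        exact hqc.1.symm
      exact hx (mem_support_of_adj_toSubgraph hyx.symm)
    rw [support_cons, List.disjoint_cons_right]
    exact ⟨hx, ih hqc.2 hy hu.2 hw.2⟩

theorem edges_eq_of_length_eq_one {p : G.Walk u v} (hp : p.length = 1) :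
    p.edges = [s(u, v)] := by
  cases p with
  | nil => simp at hp
  | cons _ q => cases q with
    | nil => rfl
    | cons => simp at hp

theorem IsPath.isCycle_append_reverse {c : G.Walk v v} {W P : G.Walk u w} (hW : W.IsPath)
    (hWc : W.toSubgraph ≤ c.toSubgraph) (hP : P.IsPath) (hPl : 0 < P.length)
    (hPint : ∀ x ∈ P.support, x ≠ u → x ≠ w → x ∉ c.support)
    (hPe : ∀ e ∈ P.edges, e ∉ c.edges) :
    (W.append P.reverse).IsCycle := by
  refine hW.isCycle_append hP.reverse (List.disjoint_left.mpr fun x hxW hxP => ?_) ?_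
  · have hWnd := hW.support_nodup
    have hPnd := hP.reverse.support_nodup
    rw [← cons_tail_support] at hWnd hPnd
    have hxu : x ≠ u := by rintro rfl; exact (List.nodup_cons.mp hWnd).1 hxW
    have hxw : x ≠ w := by rintro rfl; exact (List.nodup_cons.mp hPnd).1 hxP
    have hxc : x ∈ c.support := by
      rw [← mem_verts_toSubgraph]
      exact hWc.1 (W.mem_verts_toSubgraph.mpr (List.mem_of_mem_tail hxW))
    have hxP' : x ∈ P.support := by
      simpa using List.mem_of_mem_tail hxP
    exact hPint x hxP' hxu hxw hxc
  · by_contra! hle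
    rw [length_reverse] at hle
    have hWl : W.length ≠ 0 := by
      intro h0
      obtain rfl := W.eq_of_length_eq_zero h0
      exact hPl.ne' (length_eq_zero_iff.mpr (isPath_iff_nil.mp hP))
    have hPe' := edges_eq_of_length_eq_one (p := P) (by omega)
    have hWe := edges_eq_of_length_eq_one (p := W) (by omega)
    refine hPe s(u, w) (by simp [hPe']) ?_
    rw [← mem_edges_toSubgraph]
    exact Subgraph.edgeSet_mono hWc (W.mem_edges_toSubgraph.mpr (by simp [hWe]))

theorem even_countP_not_pOdd_iff (A : Set V) (p : G.Walk u v) :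
    Even (p.edges.countP fun e => ¬ POdd A e) ↔ (u ∈ A ↔ v ∈ A) := by
  induction p with
  | nil => simp
  | @cons x y z _ q ih =>
    rw [edges_cons, List.countP_cons, pOdd_mk_iff]
    by_cases hx : x ∈ A <;> by_cases hy : y ∈ A <;>
      simp_all [Nat.even_add_one]

theorem odd_length_of_odd_countP_pOdd (A : Set V) (c : G.Walk v v)
    (h : Odd (c.edges.countP fun e => POdd A e)) : Odd c.length := by
  have hsplit := c.edges.length_eq_countP_add_countP fun e => POdd A e
  rw [length_edges] at hsplit
  have hcross : Even (c.edges.countP fun e => ¬ POdd A e) :=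
    (even_countP_not_pOdd_iff A c).mpr Iff.rfl
  rw [hsplit]
  exact h.add_even (by simpa using hcross)

theorem odd_length_of_unique_pOdd (A : Set V) {c : G.Walk v v} (hc : c.edges.Nodup)
    {e : Sym2 V} (he : e ∈ c.edges) (hAe : POdd A e)
    (huniq : ∀ f ∈ c.edges, POdd A f → f = e) : Odd c.length := by
  refine odd_length_of_odd_countP_pOdd A c ?_
  have hcount : (c.edges.countP fun f => POdd A f) = c.edges.count e :=
    List.countP_congr fun f hf => by
      simpa using ⟨huniq f hf, fun hfe => hfe ▸ hAe⟩
  rw [hcount, List.count_eq_one_of_mem hc he]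
  exact odd_one

theorem odd_length_append_reverse (A : Set V) {W P : G.Walk u v}
    (hC : (W.append P.reverse).IsCycle) {e : Sym2 V} (he : e ∈ W.edges) (hAe : POdd A e)
    (hW : ∀ f ∈ W.edges, POdd A f → f = e) (hP : ∀ f ∈ P.edges, ¬ POdd A f) :
    Odd (W.append P.reverse).length := by
  refine odd_length_of_unique_pOdd A hC.edges_nodup (by simp [he]) hAe fun f hf hAf => ?_
  simp only [edges_append, edges_reverse, List.mem_append, List.mem_reverse] at hf
  exact hf.elim (hW f · hAf) fun hfP => absurd hAf (hP f hfP)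

end SimpleGraph.Walk

theorem stmt_18_general {V : Type u} (G : SimpleGraph V)
    (v : V) (c : G.Walk v v) (hc : c.IsCycle)
    (p₁ p₂ q₁ q₂ : V) (P : G.Walk p₁ p₂) (Q : G.Walk q₁ q₂)
    (hP : P.IsPath) (hQ : Q.IsPath) (hPl : 0 < P.length) (hQl : 0 < Q.length)
    (hPint : ∀ x ∈ P.support, x ≠ p₁ → x ≠ p₂ → x ∉ c.support)
    (hQint : ∀ x ∈ Q.support, x ≠ q₁ → x ≠ q₂ → x ∉ c.support)
    (hPe : ∀ e ∈ P.edges, e ∉ c.edges) (hQe : ∀ e ∈ Q.edges, e ∉ c.edges)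
    (hdisj : P.support.Disjoint Q.support)
    (e₁ e₂ : Sym2 V)
    (h₁ : ∃ W : G.Walk p₁ p₂, W.IsPath ∧ (∀ e ∈ W.edges, e ∈ c.edges) ∧
      e₁ ∈ W.edges ∧ q₁ ∉ W.support ∧ q₂ ∉ W.support)
    (h₂ : ∃ W : G.Walk q₁ q₂, W.IsPath ∧ (∀ e ∈ W.edges, e ∈ c.edges) ∧
      e₂ ∈ W.edges ∧ p₁ ∉ W.support ∧ p₂ ∉ W.support) :
    ∃ (a b : V) (C₁ : G.Walk a a) (C₂ : G.Walk b b),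
      C₁.IsCycle ∧ C₂.IsCycle ∧ WalkEdgeDisjoint C₁ C₂ ∧
      (∀ e ∈ C₁.edges, e ∈ c.edges ∨ e ∈ P.edges) ∧
      (∀ e ∈ C₂.edges, e ∈ c.edges ∨ e ∈ Q.edges) ∧
      (∀ e ∈ P.edges, e ∈ C₁.edges) ∧ (∀ e ∈ Q.edges, e ∈ C₂.edges) ∧
      e₁ ∈ C₁.edges ∧ e₂ ∈ C₂.edges ∧
      (∀ A : Set V, (∀ e ∈ c.edges, POdd A e → e = e₁ ∨ e = e₂) →
        POdd A e₁ → POdd A e₂ →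
        (∀ e ∈ P.edges, ¬ POdd A e) → (∀ e ∈ Q.edges, ¬ POdd A e) →
        Odd C₁.length ∧ Odd C₂.length) := by
  obtain ⟨W₁, hW₁, hW₁c, he₁, hq₁W₁, -⟩ := h₁
  obtain ⟨W₂, hW₂, hW₂c, he₂, hp₁W₂, hp₂W₂⟩ := h₂
  have hW₁le := Walk.toSubgraph_le_of_edges_subset
    (fun h => List.ne_nil_of_mem he₁ (Walk.edges_eq_nil.mpr h)) hW₁c
  have hW₂le := Walk.toSubgraph_le_of_edges_subset
    (fun h => List.ne_nil_of_mem he₂ (Walk.edges_eq_nil.mpr h)) hW₂c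
  have hW₁₂ : W₁.edges.Disjoint W₂.edges := Walk.disjoint_edges_of_disjoint_support <|
    hc.support_disjoint_of_toSubgraph_le hW₁ hW₁le W₂ hW₂le hq₁W₁ hp₁W₂ hp₂W₂
  have hPQ : P.edges.Disjoint Q.edges := Walk.disjoint_edges_of_disjoint_support hdisj
  have hC₁ := hW₁.isCycle_append_reverse hW₁le hP hPl hPint hPe
  have hC₂ := hW₂.isCycle_append_reverse hW₂le hQ hQl hQint hQe
  refine ⟨p₁, q₁, W₁.append P.reverse, W₂.append Q.reverse, hC₁, hC₂, ?_⟩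
  simp only [WalkEdgeDisjoint, Walk.edges_append, Walk.edges_reverse, List.mem_append,
    List.mem_reverse]
  refine ⟨?_, fun e he => he.imp_left (hW₁c e), fun e he => he.imp_left (hW₂c e),
    fun e => Or.inr, fun e => Or.inr, Or.inl he₁, Or.inl he₂, fun A hcA hA₁ hA₂ hAP hAQ => ?_⟩
  · rintro e (heW₁ | heP) (heW₂ | heQ)
    · exact List.disjoint_left.mp hW₁₂ heW₁ heW₂
    · exact hQe e heQ (hW₁c e heW₁)
    · exact hPe e heP (hW₂c e heW₂)
    · exact List.disjoint_left.mp hPQ heP heQ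
  exact ⟨Walk.odd_length_append_reverse A hC₁ he₁ hA₁ (fun f hf hAf =>
      (hcA f (hW₁c f hf) hAf).resolve_right fun h => List.disjoint_left.mp hW₁₂ hf (h ▸ he₂)) hAP,
    Walk.odd_length_append_reverse A hC₂ he₂ hA₂ (fun f hf hAf =>
      (hcA f (hW₂c f hf) hAf).resolve_left fun h => List.disjoint_left.mp hW₁₂ (h ▸ he₁) hf) hAQ⟩

/-- let `c` be a cycle and `P`, `Q` two disjoint `c`-paths which are not
crossing on `c`; the non-crossing is witnessed by an arc of `c` from `p₁` to `p₂`
avoiding `q₁,q₂` containing a prescribed edge `e₁` (i.e. `e₁` is separated from `P` and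
`Q`), and an arc from `q₁` to `q₂` avoiding `p₁,p₂` containing `e₂`. Then `c ∪ P ∪ Q`
contains two edge-disjoint cycles, one through `P` and `e₁`, the other through `Q` and
`e₂`; in particular if `e₁,e₂` are the only parity-carrying (P-odd) edges, the two
cycles are odd. -/
theorem stmt_18 {V : Type u} (G : SimpleGraph V)
    (v : V) (c : G.Walk v v) (hc : c.IsCycle)
    (p₁ p₂ q₁ q₂ : V) (P : G.Walk p₁ p₂) (Q : G.Walk q₁ q₂)
    (hP : P.IsPath) (hQ : Q.IsPath) (hPl : 0 < P.length) (hQl : 0 < Q.length)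
    (hp₁ : p₁ ∈ c.support) (hp₂ : p₂ ∈ c.support)
    (hq₁ : q₁ ∈ c.support) (hq₂ : q₂ ∈ c.support)
    (hPint : ∀ x ∈ P.support, x ≠ p₁ → x ≠ p₂ → x ∉ c.support)
    (hQint : ∀ x ∈ Q.support, x ≠ q₁ → x ≠ q₂ → x ∉ c.support)
    (hPe : ∀ e ∈ P.edges, e ∉ c.edges) (hQe : ∀ e ∈ Q.edges, e ∉ c.edges)
    (hdisj : P.support.Disjoint Q.support)
    (e₁ e₂ : Sym2 V)
    (h₁ : ∃ W : G.Walk p₁ p₂, W.IsPath ∧ (∀ e ∈ W.edges, e ∈ c.edges) ∧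
      e₁ ∈ W.edges ∧ q₁ ∉ W.support ∧ q₂ ∉ W.support)
    (h₂ : ∃ W : G.Walk q₁ q₂, W.IsPath ∧ (∀ e ∈ W.edges, e ∈ c.edges) ∧
      e₂ ∈ W.edges ∧ p₁ ∉ W.support ∧ p₂ ∉ W.support) :
    ∃ (a b : V) (C₁ : G.Walk a a) (C₂ : G.Walk b b),
      C₁.IsCycle ∧ C₂.IsCycle ∧ WalkEdgeDisjoint C₁ C₂ ∧
      (∀ e ∈ C₁.edges, e ∈ c.edges ∨ e ∈ P.edges) ∧
      (∀ e ∈ C₂.edges, e ∈ c.edges ∨ e ∈ Q.edges) ∧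
      (∀ e ∈ P.edges, e ∈ C₁.edges) ∧ (∀ e ∈ Q.edges, e ∈ C₂.edges) ∧
      e₁ ∈ C₁.edges ∧ e₂ ∈ C₂.edges ∧
      (∀ A : Set V, (∀ e ∈ c.edges, POdd A e → e = e₁ ∨ e = e₂) →
        POdd A e₁ → POdd A e₂ →
        (∀ e ∈ P.edges, ¬ POdd A e) → (∀ e ∈ Q.edges, ¬ POdd A e) →
        Odd C₁.length ∧ Odd C₂.length) :=
  stmt_18_general G v c hc p₁ p₂ q₁ q₂ P Q hP hQ hPl hQl hPint hQint hPe hQe hdisj e₁ e₂ h₁ h₂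
end
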